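/- Let f : ℝ³ → ℝ be a nonnegative symmetric-in-nothing integrable function. Then by symmetrization and energy conservation, ∫∫∫_{S²₊} ω·(v−v₁) |v'|² f(v)f(v₁) dω dv dv₁ = (π/2) ∫∫ |v−v₁| (|v|² + |v₁|²) f(v)f(v₁) dv dv₁, where v' = v − ω[ω·(v−v₁)] and S²₊ = {ω : (v−v₁)·ω ≥ 0}. -/

import Mathlib

/-!
Swapping `v ↔ v₁` and reflecting `ω ↦ -ω`, which preserves the surface measure, turns the
post-collisional velocity `v' = v - ⟪ω, v - v₁⟫ ω` into `v₁' = v₁ + ⟪ω, v - v₁⟫ ω` over the same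
hemisphere, so the symmetrized kernel carries `‖v'‖² + ‖v₁'‖² = ‖v‖² + ‖v₁‖²`. What remains is
`∫_{S²} ⟪u, ω⟫₊ dω = π ‖u‖`: in polar coordinates against the weight `r e^{-r²}`, the homogeneous
integrand becomes `⟪u, x⟫₊ e^{-‖x‖²}`, and after rotating `u` onto a coordinate axis this
factorizes into one-dimensional Gaussian integrals. The cubic growth of both kernels is
controlled by the moment `(1 + ‖v‖²)^{3/2}` of `f`, which justifies Fubini.
-/

open MeasureTheory Real Metric Set Module

namespace MeasureTheory.Measure

theorem integral_volumeIoiPow (n : ℕ) (K : ℝ → ℝ) :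
    ∫ r, K r ∂volumeIoiPow n = ∫ r in Ioi 0, r ^ n * K r := by
  rw [volumeIoiPow, integral_withDensity_eq_integral_toReal_smul
      (by fun_prop) (Filter.Eventually.of_forall fun _ => ENNReal.ofReal_lt_top),
    integral_subtype_comap measurableSet_Ioi (fun r => (ENNReal.ofReal (r ^ n)).toReal • K r)]
  refine setIntegral_congr_fun measurableSet_Ioi fun r hr => ?_
  simp [ENNReal.toReal_ofReal (pow_nonneg (le_of_lt hr) n)]

variable {E : Type*} [NormedAddCommGroup E] [NormedSpace ℝ E] [FiniteDimensional ℝ E]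
  [Nontrivial E] [MeasurableSpace E] [BorelSpace E] (μ : Measure E) [μ.IsAddHaarMeasure]

theorem integral_toSphere_mul_integral_volumeIoiPow (G : E → ℝ) (K : ℝ → ℝ) :
    (∫ ω, G ω ∂μ.toSphere) * ∫ r, K r ∂volumeIoiPow (finrank ℝ E - 1) =
      ∫ x, G (‖x‖⁻¹ • x) * K ‖x‖ ∂μ := by
  rw [← integral_prod_mul, ← (μ.measurePreserving_homeomorphUnitSphereProd).integral_comp
      (Homeomorph.measurableEmbedding _) (fun p => G p.1 * K p.2)]
  simp only [homeomorphUnitSphereProd_apply_fst_coe, homeomorphUnitSphereProd_apply_snd_coe]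
  rw [integral_subtype_comap (measurableSet_singleton 0).compl (fun x => G (‖x‖⁻¹ • x) * K ‖x‖),
    restrict_compl_singleton]

theorem integral_toSphere_mul_gamma (G : E → ℝ) :
    (∫ ω, G ω ∂μ.toSphere) * (Gamma ((finrank ℝ E + 1) / 2) / 2) =
      ∫ x, G (‖x‖⁻¹ • x) * (‖x‖ * exp (-‖x‖ ^ 2)) ∂μ := by
  rw [← integral_toSphere_mul_integral_volumeIoiPow μ G fun r => r * exp (-r ^ 2)]
  congr 1
  have hd : 0 < finrank ℝ E := finrank_pos
  calc Gamma ((finrank ℝ E + 1) / 2) / 2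
      = ∫ r in Ioi 0, r ^ (finrank ℝ E : ℝ) * exp (-r ^ (2 : ℝ)) := by
        rw [integral_rpow_mul_exp_neg_rpow two_pos
          (neg_one_lt_zero.trans_le (Nat.cast_nonneg _))]
        ring
    _ = ∫ r in Ioi 0, r ^ (finrank ℝ E - 1) * (r * exp (-r ^ 2)) :=
        setIntegral_congr_fun measurableSet_Ioi fun r _ => by
          rw [← mul_assoc, ← pow_succ, Nat.sub_add_cancel hd, rpow_natCast, rpow_two]
    _ = _ := (integral_volumeIoiPow _ fun r => r * exp (-r ^ 2)).symm

theorem integral_toSphere_mul_gamma_of_homogeneous (G : E → ℝ)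
    (hG : ∀ (c : ℝ) (x : E), 0 ≤ c → G (c • x) = c * G x) :
    (∫ ω, G ω ∂μ.toSphere) * (Gamma ((finrank ℝ E + 1) / 2) / 2) =
      ∫ x, G x * exp (-‖x‖ ^ 2) ∂μ := by
  rw [integral_toSphere_mul_gamma]
  congr 1 with x
  rcases eq_or_ne x 0 with rfl | hx
  · simpa using (hG 0 0 le_rfl).symm
  · rw [← mul_assoc, mul_comm (G _), ← hG _ _ (norm_nonneg x),
      smul_inv_smul₀ (norm_ne_zero_iff.2 hx)]

theorem integral_toSphere_comp_neg (G : E → ℝ) :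
    ∫ ω : sphere (0 : E) 1, G (-ω) ∂μ.toSphere = ∫ ω, G ω ∂μ.toSphere := by
  have hc : Gamma ((finrank ℝ E + 1) / 2) / 2 ≠ 0 := by positivity
  apply mul_right_cancel₀ hc
  rw [integral_toSphere_mul_gamma μ (fun x => G (-x)), integral_toSphere_mul_gamma μ G,
    ← integral_neg_eq_self]
  simp only [norm_neg, smul_neg, neg_neg]

end MeasureTheory.Measure

theorem integral_max_mul_exp_neg_sq : ∫ t : ℝ, max t 0 * exp (-t ^ 2) = 1 / 2 := by
  have hind : (fun t : ℝ => max t 0 * exp (-t ^ 2)) =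
      (Ioi 0).indicator fun t => t ^ (1 : ℝ) * exp (-t ^ (2 : ℝ)) := by
    ext t
    by_cases ht : 0 < t
    · simp [indicator_of_mem (mem_Ioi.2 ht), max_eq_left ht.le]
    · simp [indicator_of_notMem (notMem_Ioi.2 (not_lt.1 ht)), max_eq_right (not_lt.1 ht)]
  rw [hind, integral_indicator measurableSet_Ioi,
    integral_rpow_mul_exp_neg_rpow two_pos (by norm_num)]
  norm_num

theorem EuclideanSpace.integral_max_coord_mul_exp_neg_norm_sq {ι : Type*} [Fintype ι]
    [DecidableEq ι] (i : ι) :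
    ∫ y : EuclideanSpace ℝ ι, max (y i) 0 * exp (-‖y‖ ^ 2) = √π ^ (Fintype.card ι - 1) / 2 := by
  let g : ι → ℝ → ℝ := fun j t => (if j = i then max t 0 else 1) * exp (-t ^ 2)
  have hprod (x : ι → ℝ) :
      max (x i) 0 * exp (-‖WithLp.toLp 2 x‖ ^ 2) = ∏ j, g j (x j) := by
    simp only [g, Finset.prod_mul_distrib, Finset.prod_ite_eq', if_pos (Finset.mem_univ i),
      EuclideanSpace.real_norm_sq_eq, ← Finset.sum_neg_distrib, exp_sum]
  have hg : ∀ j ∈ Finset.univ \ {i}, ∫ t, g j t = √π := by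
    intro j hj
    simpa [g, Finset.mem_singleton.not.1 (Finset.mem_sdiff.1 hj).2] using integral_gaussian 1
  have hgi : ∫ t, g i t = 1 / 2 := by simpa [g] using integral_max_mul_exp_neg_sq
  rw [← (EuclideanSpace.volume_preserving_symm_measurableEquiv_toLp ι).symm.integral_comp']
  simp only [MeasurableEquiv.symm_symm, MeasurableEquiv.coe_toLp, hprod]
  rw [integral_fintype_prod_volume_eq_prod,
    Finset.prod_eq_mul_prod_sdiff_singleton_of_mem (Finset.mem_univ i), hgi,
    Finset.prod_congr rfl hg, Finset.prod_const, Finset.card_univ_sdiff, Finset.card_singleton]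
  ring

theorem add_pow_three_le_mul_rpow {a b : ℝ} (ha : 0 ≤ a) (hb : 0 ≤ b) :
    (a + b) ^ 3 ≤ 8 * ((1 + a ^ 2) ^ ((3 : ℝ) / 2) * (1 + b ^ 2) ^ ((3 : ℝ) / 2)) := by
  have hpow (t : ℝ) : (1 + t ^ 2) ^ ((3 : ℝ) / 2) = √(1 + t ^ 2) ^ 3 := by
    rw [sqrt_eq_rpow, ← rpow_mul_natCast (by positivity)]
    norm_num
  have hle (t : ℝ) (ht : 0 ≤ t) : t ≤ √(1 + t ^ 2) := le_sqrt_of_sq_le (by linarith)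
  have hone (t : ℝ) : 1 ≤ √(1 + t ^ 2) := one_le_sqrt.2 (by nlinarith)
  have hsum : a + b ≤ 2 * (√(1 + a ^ 2) * √(1 + b ^ 2)) := by
    nlinarith [hle a ha, hle b hb, hone a, hone b]
  rw [hpow, hpow]
  calc (a + b) ^ 3 ≤ (2 * (√(1 + a ^ 2) * √(1 + b ^ 2))) ^ 3 := by gcongr
    _ = _ := by ring

theorem integrable_mul_mul_of_abs_le_mul_add_pow_three {α : Type*} [NormedAddCommGroup α]
    [MeasurableSpace α] {μ : Measure α} [SFinite μ] {f : α → ℝ} (hf : Measurable f)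
    (hf₃ : Integrable (fun v => f v * (1 + ‖v‖ ^ 2) ^ ((3 : ℝ) / 2)) μ) {G : α → α → ℝ}
    (hG : AEStronglyMeasurable (fun p : α × α => G p.1 p.2) (μ.prod μ)) {C : ℝ} (hC : 0 ≤ C)
    (hGC : ∀ v v₁, |G v v₁| ≤ C * (‖v‖ + ‖v₁‖) ^ 3) :
    Integrable (fun p : α × α => G p.1 p.2 * (f p.1 * f p.2)) (μ.prod μ) := by
  refine ((hf₃.norm.mul_prod hf₃.norm).const_mul (8 * C)).mono'
    (hG.mul ((hf.comp measurable_fst).mul (hf.comp measurable_snd)).aestronglyMeasurable)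
    (ae_of_all _ fun p => ?_)
  have hw (v : α) : 0 ≤ (1 + ‖v‖ ^ 2) ^ ((3 : ℝ) / 2) := by positivity
  simp only [norm_mul, Real.norm_eq_abs, abs_of_nonneg (hw _)]
  calc |G p.1 p.2| * (|f p.1| * |f p.2|)
      ≤ C * (‖p.1‖ + ‖p.2‖) ^ 3 * (|f p.1| * |f p.2|) := by gcongr; exact hGC _ _
    _ ≤ C * (8 * ((1 + ‖p.1‖ ^ 2) ^ ((3 : ℝ) / 2) * (1 + ‖p.2‖ ^ 2) ^ ((3 : ℝ) / 2)))
          * (|f p.1| * |f p.2|) := by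
        gcongr; exact add_pow_three_le_mul_rpow (norm_nonneg _) (norm_nonneg _)
    _ = _ := by ring

theorem two_mul_integral_prod_eq_of_add_swap {α : Type*} [MeasurableSpace α] {μ : Measure α}
    [SFinite μ] {K L : α → α → ℝ} (hK : Integrable (fun p : α × α => K p.1 p.2) (μ.prod μ))
    (hKL : ∀ x y, K x y + K y x = L x y) :
    2 * ∫ p, K p.1 p.2 ∂μ.prod μ = ∫ p, L p.1 p.2 ∂μ.prod μ := by
  have hswap : ∫ p, K p.2 p.1 ∂μ.prod μ = ∫ p, K p.1 p.2 ∂μ.prod μ :=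
    integral_prod_swap fun p : α × α => K p.1 p.2
  have hK' : Integrable (fun p : α × α => K p.2 p.1) (μ.prod μ) := hK.swap
  rw [two_mul]
  nth_rw 2 [← hswap]
  rw [← integral_add hK hK']
  simp only [hKL]

theorem norm_sub_inner_smul_sq_add_norm_add_inner_smul_sq {F : Type*} [NormedAddCommGroup F]
    [InnerProductSpace ℝ F] {ω : F} (hω : ‖ω‖ = 1) (v v₁ : F) :
    ‖v - inner ℝ ω (v - v₁) • ω‖ ^ 2 + ‖v₁ + inner ℝ ω (v - v₁) • ω‖ ^ 2 =
      ‖v‖ ^ 2 + ‖v₁‖ ^ 2 := by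
  rw [norm_sub_sq_real, norm_add_sq_real, real_inner_smul_right, real_inner_smul_right,
    norm_smul, Real.norm_eq_abs, hω, mul_one, sq_abs, real_inner_comm ω v,
    real_inner_comm ω v₁, inner_sub_right]
  ring

section InnerProductSpace

variable {F : Type*} [NormedAddCommGroup F] [InnerProductSpace ℝ F] [FiniteDimensional ℝ F]
  [MeasurableSpace F] [BorelSpace F]

theorem integral_comp_inner_norm_eq_integral_comp_coord {ι : Type*} [Fintype ι]
    (hι : finrank ℝ F = Fintype.card ι) (i : ι) {w : F} (hw : ‖w‖ = 1) (Φ : ℝ → ℝ → ℝ) :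
    ∫ x : F, Φ (inner ℝ w x) ‖x‖ = ∫ y : EuclideanSpace ℝ ι, Φ (y i) ‖y‖ := by
  have hw' : Orthonormal ℝ (({i} : Set ι).domRestrict fun _ => w) :=
    ⟨fun _ => hw, fun j k hjk => absurd (Subtype.ext (j.2.trans k.2.symm)) hjk⟩
  obtain ⟨b, hb⟩ := hw'.exists_orthonormalBasis_extension_of_card_eq hι
  rw [← b.measurePreserving_repr.integral_comp b.repr.toHomeomorph.measurableEmbedding]
  simp [b.repr_apply_apply, hb i rfl]

theorem integral_toSphere_max_inner [Nontrivial F] (u : F) :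
    ∫ ω, max (inner ℝ u (ω : F)) 0 ∂(volume : Measure F).toSphere =
      ‖u‖ * √π ^ (finrank ℝ F - 1) / Gamma ((finrank ℝ F + 1) / 2) := by
  rcases eq_or_ne u 0 with rfl | hu
  · simp
  have hΓ : Gamma ((finrank ℝ F + 1) / 2) ≠ 0 := by positivity
  have hw : ‖‖u‖⁻¹ • u‖ = 1 := norm_smul_inv_norm hu
  have hrot (x : F) : max (inner ℝ u x) 0 * exp (-‖x‖ ^ 2) =
      ‖u‖ * (max (inner ℝ (‖u‖⁻¹ • u) x) 0 * exp (-‖x‖ ^ 2)) := by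
    rw [real_inner_smul_left, ← mul_assoc, mul_max_of_nonneg _ _ (norm_nonneg u), mul_zero,
      mul_inv_cancel_left₀ (norm_ne_zero_iff.2 hu)]
  have hhom (c : ℝ) (x : F) (hc : 0 ≤ c) :
      max (inner ℝ u (c • x)) 0 = c * max (inner ℝ u x) 0 := by
    rw [real_inner_smul_right, mul_max_of_nonneg _ _ hc, mul_zero]
  apply mul_right_cancel₀ (div_ne_zero hΓ two_ne_zero)
  rw [Measure.integral_toSphere_mul_gamma_of_homogeneous _ (fun x => max (inner ℝ u x) 0) hhom,
    integral_congr_ae (Filter.Eventually.of_forall hrot), integral_const_mul,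
    integral_comp_inner_norm_eq_integral_comp_coord (Fintype.card_fin _).symm
      ⟨0, finrank_pos⟩ hw fun a r => max a 0 * exp (-r ^ 2),
    EuclideanSpace.integral_max_coord_mul_exp_neg_norm_sq, Fintype.card_fin]
  field_simp

-- The hemisphere `S²₊ = {ω | 0 ≤ ⟪v - v₁, ω⟫}` is encoded by the positive part of `⟪v - v₁, ω⟫`.
noncomputable def energyKernel (v v₁ : F) : ℝ :=
  ∫ ω : sphere (0 : F) 1,
    max (inner ℝ (v - v₁) (ω : F)) 0 * ‖v - inner ℝ (ω : F) (v - v₁) • (ω : F)‖ ^ 2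
    ∂(volume : Measure F).toSphere

theorem setIntegral_eq_energyKernel (v v₁ : F) :
    ∫ ω in {ω : sphere (0 : F) 1 | 0 ≤ inner ℝ (v - v₁) (ω : F)},
      inner ℝ (v - v₁) (ω : F) * ‖v - inner ℝ (ω : F) (v - v₁) • (ω : F)‖ ^ 2
      ∂(volume : Measure F).toSphere = energyKernel v v₁ := by
  rw [← integral_indicator (measurableSet_le measurable_const (by fun_prop))]
  congr 1 with ω
  simp only [indicator_apply, mem_ofPred_eq]
  split_ifs with h
  · rw [max_eq_left h]
  · rw [max_eq_right (le_of_not_ge h), zero_mul]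

theorem energyKernel_add_swap [Nontrivial F] (v v₁ : F) :
    energyKernel v v₁ + energyKernel v₁ v = (‖v‖ ^ 2 + ‖v₁‖ ^ 2) *
      ∫ ω, max (inner ℝ (v - v₁) (ω : F)) 0 ∂(volume : Measure F).toSphere := by
  have hint (g : sphere (0 : F) 1 → ℝ) (hg : Continuous g) :
      Integrable g (volume : Measure F).toSphere :=
    hg.integrable_of_hasCompactSupport (.of_compactSpace _)
  rw [energyKernel, energyKernel, ← Measure.integral_toSphere_comp_neg volume fun x =>
      max (inner ℝ (v₁ - v) x) 0 * ‖v₁ - inner ℝ x (v₁ - v) • x‖ ^ 2,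
    ← integral_add (hint _ ?_) (hint _ ?_), ← integral_const_mul]
  · congr 1 with ω
    have hω : ‖(ω : F)‖ = 1 := norm_eq_of_mem_sphere ω
    have h₁ : inner ℝ (v₁ - v) (-(ω : F)) = inner ℝ (v - v₁) (ω : F) := by
      rw [inner_neg_right, ← inner_neg_left, neg_sub]
    have h₂ : inner ℝ (-(ω : F)) (v₁ - v) • -(ω : F) =
        -(inner ℝ (ω : F) (v - v₁) • (ω : F)) := by
      rw [smul_neg, inner_neg_left, ← inner_neg_right, neg_sub]
    rw [h₁, h₂, sub_neg_eq_add, ← mul_add,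
      norm_sub_inner_smul_sq_add_norm_add_inner_smul_sq hω, mul_comm]
  all_goals fun_prop

theorem abs_energyKernel_le (v v₁ : F) :
    |energyKernel v v₁| ≤ (volume : Measure F).toSphere.real univ * (‖v‖ + ‖v₁‖) ^ 3 := by
  rw [← Real.norm_eq_abs, mul_comm]
  refine norm_integral_le_of_norm_le_const (ae_of_all _ fun ω => ?_)
  have hω : ‖(ω : F)‖ = 1 := norm_eq_of_mem_sphere ω
  have hmax : max (inner ℝ (v - v₁) (ω : F)) 0 ≤ ‖v‖ + ‖v₁‖ := by
    refine max_le ?_ (by positivity)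
    calc inner ℝ (v - v₁) (ω : F) ≤ ‖v - v₁‖ * ‖(ω : F)‖ := real_inner_le_norm _ _
      _ ≤ ‖v‖ + ‖v₁‖ := by rw [hω, mul_one]; exact norm_sub_le _ _
  have hpost : ‖v - inner ℝ (ω : F) (v - v₁) • (ω : F)‖ ^ 2 ≤ (‖v‖ + ‖v₁‖) ^ 2 := by
    nlinarith [norm_sub_inner_smul_sq_add_norm_add_inner_smul_sq hω v v₁, norm_nonneg v,
      norm_nonneg v₁, sq_nonneg ‖v₁ + inner ℝ (ω : F) (v - v₁) • (ω : F)‖]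
  rw [Real.norm_eq_abs, abs_of_nonneg (by positivity), pow_succ' _ 2]
  exact mul_le_mul hmax hpost (by positivity) (by positivity)

theorem stronglyMeasurable_energyKernel :
    StronglyMeasurable fun p : F × F => energyKernel p.1 p.2 := by
  refine StronglyMeasurable.integral_prod_right' (f := fun q : (F × F) × sphere (0 : F) 1 =>
    max (inner ℝ (q.1.1 - q.1.2) (q.2 : F)) 0 *
      ‖q.1.1 - inner ℝ (q.2 : F) (q.1.1 - q.1.2) • (q.2 : F)‖ ^ 2) ?_
  exact Continuous.stronglyMeasurable (by fun_prop)

end InnerProductSpace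

theorem integral_toSphere_max_inner_fin_three (u : EuclideanSpace ℝ (Fin 3)) :
    ∫ ω, max (inner ℝ u (ω : EuclideanSpace ℝ (Fin 3))) 0
      ∂(volume : Measure (EuclideanSpace ℝ (Fin 3))).toSphere = π * ‖u‖ := by
  rw [integral_toSphere_max_inner, finrank_euclideanSpace_fin]
  norm_num [sq_sqrt pi_pos.le]
  ring

theorem A2_symmetrization_general (f : EuclideanSpace ℝ (Fin 3) → ℝ)
    (hm : Measurable f)
    (hi3 : Integrable (fun v => f v * (1 + ‖v‖ ^ 2) ^ ((3:ℝ)/2))) :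
    (∫ v, ∫ v₁,
      (∫ ω in {ω : Metric.sphere (0 : EuclideanSpace ℝ (Fin 3)) 1 |
          0 ≤ (inner ℝ (v - v₁) (ω : EuclideanSpace ℝ (Fin 3)) : ℝ)},
        (inner ℝ (v - v₁) (ω : EuclideanSpace ℝ (Fin 3)) : ℝ) *
          ‖v - (inner ℝ (ω : EuclideanSpace ℝ (Fin 3)) (v - v₁) : ℝ) •
            (ω : EuclideanSpace ℝ (Fin 3))‖ ^ 2
        ∂((volume : Measure (EuclideanSpace ℝ (Fin 3))).toSphere)) * (f v * f v₁)) =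
    (π / 2) * ∫ v, ∫ v₁, ‖v - v₁‖ * (‖v‖ ^ 2 + ‖v₁‖ ^ 2) * (f v * f v₁) := by
  have hK := integrable_mul_mul_of_abs_le_mul_add_pow_three hm hi3
    stronglyMeasurable_energyKernel.aestronglyMeasurable measureReal_nonneg abs_energyKernel_le
  have hΨ := integrable_mul_mul_of_abs_le_mul_add_pow_three hm hi3
    (G := fun v v₁ => ‖v - v₁‖ * (‖v‖ ^ 2 + ‖v₁‖ ^ 2)) (by fun_prop) zero_le_one fun v v₁ => by
      rw [one_mul, abs_of_nonneg (by positivity)]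
      nlinarith [norm_sub_le v v₁, norm_nonneg v, norm_nonneg v₁, norm_nonneg (v - v₁)]
  simp only [setIntegral_eq_energyKernel]
  rw [← integral_prod _ hK, ← integral_prod _ hΨ]
  have hsym := two_mul_integral_prod_eq_of_add_swap
    (K := fun v v₁ => energyKernel v v₁ * (f v * f v₁)) hK
    (L := fun v v₁ => π * (‖v - v₁‖ * (‖v‖ ^ 2 + ‖v₁‖ ^ 2) * (f v * f v₁))) fun v v₁ => by
      have h := energyKernel_add_swap v v₁
      rw [integral_toSphere_max_inner_fin_three] at h
      linear_combination (f v * f v₁) * h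
  rw [integral_const_mul] at hsym
  linarith

/-- Symmetrization identity (4.5): computation of `A₂`. -/
theorem A2_symmetrization (f : EuclideanSpace ℝ (Fin 3) → ℝ)
    (hnn : ∀ v, 0 ≤ f v) (hm : Measurable f)
    (hi : Integrable f)
    (hi3 : Integrable (fun v => f v * (1 + ‖v‖ ^ 2) ^ ((3:ℝ)/2))) :
    (∫ v, ∫ v₁,
      (∫ ω in {ω : Metric.sphere (0 : EuclideanSpace ℝ (Fin 3)) 1 |
          0 ≤ (inner ℝ (v - v₁) (ω : EuclideanSpace ℝ (Fin 3)) : ℝ)},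
        (inner ℝ (v - v₁) (ω : EuclideanSpace ℝ (Fin 3)) : ℝ) *
          ‖v - (inner ℝ (ω : EuclideanSpace ℝ (Fin 3)) (v - v₁) : ℝ) •
            (ω : EuclideanSpace ℝ (Fin 3))‖ ^ 2
        ∂((volume : Measure (EuclideanSpace ℝ (Fin 3))).toSphere)) * (f v * f v₁)) =
    (π / 2) * ∫ v, ∫ v₁, ‖v - v₁‖ * (‖v‖ ^ 2 + ‖v₁‖ ^ 2) * (f v * f v₁) :=
  A2_symmetrization_general f hm hi3
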